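/- Let d ≥ 3 be an odd integer, d ≠ 15, which is not a prime power, with prime factorization d = p₁^{k₁}···p_m^{k_m} (m ≥ 2) ordered so that p₁^{k₁} > p_j^{k_j} for all 2 ≤ j ≤ m, and set e₁ = d / p₁^{k₁}. Then e₁ ≤ d/7 and consequently (d - e₁)/2 ≥ ⌈3d/7⌉. -/
import Mathlib


/-- Let `d ≥ 3` be odd, `d ≠ 15`, with `d = p^k · e₁` where `p^k` is the largest
prime-power factor in the prime factorization of `d` (so `p` prime, `p ∤ e₁`)
and `e₁ > 1` (i.e. `d` is not a prime power). Then `e₁ ≤ d/7` and consequently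
`(d - e₁)/2 ≥ ⌈3d/7⌉`. -/
theorem largest_prime_power_factor_bound (d p k e₁ : ℕ)
    (hd3 : 3 ≤ d) (hodd : Odd d) (hne : d ≠ 15)
    (hp : p.Prime) (hfac : d = p ^ k * e₁) (hndvd : ¬ p ∣ e₁) (he : 1 < e₁)
    (hmax : ∀ q : ℕ, q.Prime → q ∣ e₁ → q ^ (d.factorization q) < p ^ k) :
    7 * e₁ ≤ d ∧ (⌈3 * (d : ℚ) / 7⌉ : ℚ) ≤ ((d : ℚ) - (e₁ : ℚ)) / 2 := by
  have hd0 : d ≠ 0 := by omega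
  have hd2 : d % 2 = 1 := Nat.odd_iff.mp hodd
  -- any prime dividing e₁ is odd and ≥ 3
  have hoddprime : ∀ r : ℕ, r.Prime → r ∣ e₁ → 3 ≤ r := by
    intro r hr hre
    have hrd : r ∣ d := hfac ▸ hre.mul_left _
    have : r ≠ 2 := by
      rintro rfl
      obtain ⟨c, hc⟩ := hrd; omega
    have := hr.two_le; omega
  obtain ⟨q, hq, hqe⟩ := Nat.exists_prime_and_dvd (by omega : e₁ ≠ 1)
  have hqd : q ∣ d := hfac ▸ hqe.mul_left _
  have hq3 : 3 ≤ q := hoddprime q hq hqe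
  have hfq : 0 < d.factorization q := hq.factorization_pos_of_dvd hd0 hqd
  have h3le : 3 ≤ q ^ d.factorization q :=
    le_trans hq3 (Nat.le_self_pow (by omega) q)
  have h4le : 4 ≤ p ^ k := by have := hmax q hq hqe; omega
  have hk0 : k ≠ 0 := by rintro rfl; simp at h4le
  have hpd : p ∣ d := hfac ▸ (dvd_pow_self p hk0).mul_right _
  have hp2 : p ≠ 2 := by
    rintro rfl
    obtain ⟨c, hc⟩ := hpd; omega
  have hpodd : p ^ k % 2 = 1 := Nat.odd_iff.mp (Odd.pow (Nat.Prime.odd_of_ne_two hp hp2))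
  -- p ^ k ≠ 5
  have hne5 : p ^ k ≠ 5 := by
    intro h5
    -- every prime dividing e₁ is 3
    have hall : ∀ r : ℕ, r.Prime → r ∣ e₁ → r = 3 := by
      intro r hr hre
      have hrd : r ∣ d := hfac ▸ hre.mul_left _
      have h3r : 3 ≤ r := hoddprime r hr hre
      have hfr : 0 < d.factorization r := hr.factorization_pos_of_dvd hd0 hrd
      have h1 : r ^ d.factorization r < 5 := h5 ▸ hmax r hr hre
      have h2 : r ≤ r ^ d.factorization r := Nat.le_self_pow (by omega) r
      have h4 : r ≠ 4 := by rintro rfl; norm_num at hr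
      omega
    have he0 : e₁ ≠ 0 := by omega
    have heq : e₁ = 3 ^ e₁.primeFactorsList.length :=
      Nat.eq_prime_pow_of_unique_prime_dvd he0 (fun {r} hr hre => hall r hr hre)
    -- 9 does not divide d
    have h9 : ¬ (9 : ℕ) ∣ d := by
      intro h9
      have h3d : (3:ℕ) ^ 2 ∣ d := by norm_num at h9 ⊢; exact h9
      have : 2 ≤ d.factorization 3 :=
        (Nat.Prime.pow_dvd_iff_le_factorization (by norm_num) hd0).mp h3d
      have h35 : (3:ℕ) ^ d.factorization 3 < 5 := h5 ▸ hmax 3 (by norm_num) (hall q hq hqe ▸ hqe)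
      have : (3:ℕ) ^ 2 ≤ 3 ^ d.factorization 3 := Nat.pow_le_pow_right (by norm_num) this
      omega
    -- length must be 1
    have hlen : e₁.primeFactorsList.length = 1 := by
      rcases Nat.lt_or_ge e₁.primeFactorsList.length 2 with h | h
      · interval_cases h' : e₁.primeFactorsList.length <;> omega
      · exfalso
        apply h9
        have : (9:ℕ) = 3 ^ 2 := by norm_num
        rw [this, hfac]
        have : (3:ℕ) ^ 2 ∣ e₁ := heq ▸ pow_dvd_pow 3 h
        exact this.mul_left _
    rw [hlen, pow_one] at heq
    rw [heq, h5] at hfac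
    omega
  have h7 : 7 ≤ p ^ k := by omega
  have hmain : 7 * e₁ ≤ d := by
    calc 7 * e₁ ≤ p ^ k * e₁ := Nat.mul_le_mul_right _ h7
    _ = d := hfac.symm
  refine ⟨hmain, ?_⟩
  -- d - e₁ is even
  have hee : e₁ % 2 = 1 := by
    rcases Nat.even_or_odd e₁ with h | h
    · exfalso
      have : (2:ℕ) ∣ d := hfac ▸ (h.two_dvd).mul_left _
      omega
    · exact Nat.odd_iff.mp h
  have hlt : e₁ ≤ d := by omega
  set m : ℕ := (d - e₁) / 2 with hm
  have hm2 : 2 * m = d - e₁ := by omega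
  have hcast : ((d : ℚ) - (e₁ : ℚ)) / 2 = (m : ℚ) := by
    have : (d : ℚ) - (e₁ : ℚ) = ((d - e₁ : ℕ) : ℚ) := by
      push_cast [hlt]; ring
    rw [this, ← hm2]; push_cast; ring
  rw [hcast]
  have : (⌈3 * (d : ℚ) / 7⌉ : ℤ) ≤ (m : ℤ) := by
    rw [Int.ceil_le]
    push_cast
    rw [div_le_iff₀ (by norm_num)]
    have : 3 * d ≤ 7 * m := by omega
    have := (Nat.cast_le (α := ℚ)).mpr this
    push_cast at this
    linarith
  exact_mod_cast this
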